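/- Let μ be a finite Borel measure on ℝ^d with closed support K_μ, let Λ ⊂ ℝ^d be countable, let φ : K_μ → ℝ^d be Borel measurable, and let ν = φ_*μ be the pushforward measure. Then E(Λ, φ) = {x ↦ e^{2πi λ·φ(x)} : λ ∈ Λ} is a frame for L²(μ) if and only if φ is μ-essentially injective and ν is a frame-spectral measure with frame spectrum Λ (i.e. E(Λ) = {y ↦ e^{2πi λ·y} : λ ∈ Λ} is a frame for L²(ν)). -/

import Mathlib

open MeasureTheory Filter Set
open scoped Real ENNReal Topology

noncomputable section

/-- `e2pi t = e^{2π i t}`. -/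
def e2pi (t : ℝ) : ℂ := Complex.exp (2 * Real.pi * Complex.I * t)

/-- The Euclidean dot product on `Fin d → ℝ`. -/
def dotp {d : ℕ} (a b : Fin d → ℝ) : ℝ := ∑ i, a i * b i

/-- `φ` is `μ`-essentially injective. -/
def EssInj {α β : Type*} [MeasurableSpace α] [MeasurableSpace β]
    (μ : Measure α) (φ : α → β) : Prop :=
  ∀ f : α → ℂ, MemLp f 2 μ →
    ∃ h : β → ℂ, MemLp h 2 (Measure.map φ μ) ∧ f =ᵐ[μ] fun x => h (φ x)

/-- The family `E(Λ, φ) = {x ↦ e^{2π i λ·φ(x)} : λ ∈ Λ}` is a frame for `L²(μ)`: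
there are `0 < A ≤ B < ∞` with `A‖f‖² ≤ Σ_{λ∈Λ} |⟨f, e_λ⟩|² ≤ B‖f‖²` for all `f ∈ L²(μ)`. -/
def FrameExp {α : Type*} [MeasurableSpace α] {d : ℕ}
    (μ : Measure α) (Λ : Set (Fin d → ℝ)) (φ : α → Fin d → ℝ) : Prop :=
  ∃ A B : ℝ, 0 < A ∧ A ≤ B ∧ ∀ f : α → ℂ, MemLp f 2 μ →
    (A * ∫ x, ‖f x‖ ^ 2 ∂μ) ≤
      (∑' lam : Λ, ‖∫ x, f x * (starRingEnd ℂ) (e2pi (dotp (lam : Fin d → ℝ) (φ x))) ∂μ‖ ^ 2) ∧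
    (∑' lam : Λ, ‖∫ x, f x * (starRingEnd ℂ) (e2pi (dotp (lam : Fin d → ℝ) (φ x))) ∂μ‖ ^ 2) ≤
      B * ∫ x, ‖f x‖ ^ 2 ∂μ

/-- `ν` is a frame-spectral measure with frame spectrum `Λ`: the exponentials `E(Λ)` form a
frame for `L²(ν)`. -/
def IsFrameSpectralMeasure {d : ℕ} (ν : Measure (Fin d → ℝ)) (Λ : Set (Fin d → ℝ)) : Prop :=
  FrameExp ν Λ id

/-!
If `f = h ∘ φ` a.e., then the frame coefficients and the `L²` norm of `f` with respect to `μ`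
coincide with those of `h` with respect to `φ_*μ` (change of variables). This transfers frame
bounds from `E(Λ)` on `L²(φ_*μ)` to `E(Λ, φ)` on `L²(μ)` once every `f` factors through `φ`, and
back from `E(Λ, φ)` to `E(Λ)` for every `h`.

Essential injectivity: `h ↦ h ∘ φ` is an isometry `L²(φ_*μ) → L²(μ)`, so its range `V` is closed,
and `V` contains every `e_λ ∘ φ`. A vector orthogonal to `V` has all frame coefficients zero, so
it vanishes by the lower frame bound; hence `V = L²(μ)`.
-/

theorem MeasureTheory.Lp.norm_sq_eq_integral_norm_sq {α 𝕜 E : Type*} [MeasurableSpace α]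
    {μ : Measure α} [RCLike 𝕜] [NormedAddCommGroup E] [InnerProductSpace 𝕜 E] (r : Lp E 2 μ) :
    ‖r‖ ^ 2 = ∫ x, ‖r x‖ ^ 2 ∂μ := by
  rw [@norm_sq_eq_re_inner 𝕜, L2.inner_def, ← integral_re (L2.integrable_inner r r)]
  simp only [inner_self_eq_norm_sq]

theorem norm_e2pi (t : ℝ) : ‖e2pi t‖ = 1 := by
  rw [e2pi, show 2 * (π : ℂ) * Complex.I * t = ((2 * π * t : ℝ) : ℂ) * Complex.I by push_cast; ring,
    Complex.norm_exp_ofReal_mul_I]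

theorem continuous_e2pi_dotp {d : ℕ} (lam : Fin d → ℝ) :
    Continuous fun y => e2pi (dotp lam y) := by
  unfold e2pi dotp; fun_prop

/-- `⟨f, e_λ ∘ φ⟩_{L²(μ)}`, the coefficient inside `FrameExp`. -/
def expCoeff {α : Type*} [MeasurableSpace α] {d : ℕ} (μ : Measure α) (φ : α → Fin d → ℝ)
    (f : α → ℂ) (lam : Fin d → ℝ) : ℂ :=
  ∫ x, f x * (starRingEnd ℂ) (e2pi (dotp lam (φ x))) ∂μ

section

variable {α β : Type*} [MeasurableSpace α] [MeasurableSpace β] {d : ℕ} {μ : Measure α}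
  {Λ : Set (Fin d → ℝ)}

theorem memLp_e2pi_dotp [IsFiniteMeasure μ] {φ : α → Fin d → ℝ} (hφ : Measurable φ)
    (lam : Fin d → ℝ) : MemLp (fun x => e2pi (dotp lam (φ x))) 2 μ :=
  .of_bound ((continuous_e2pi_dotp lam).measurable.comp hφ).aestronglyMeasurable 1 <|
    .of_forall fun _ => (norm_e2pi _).le

theorem expCoeff_eq_inner [IsFiniteMeasure μ] {φ : α → Fin d → ℝ} (hφ : Measurable φ)
    (r : Lp ℂ 2 μ) (lam : Fin d → ℝ) :
    expCoeff μ φ r lam = inner ℂ ((memLp_e2pi_dotp hφ lam).toLp _) r := by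
  rw [L2.inner_def, expCoeff]
  refine integral_congr_ae ((memLp_e2pi_dotp hφ lam).coeFn_toLp.mono fun x hx => ?_)
  simp only [hx, RCLike.inner_apply]

theorem expCoeff_eq_of_ae_eq_comp {φ : α → β} (hφ : Measurable φ) {ψ : β → Fin d → ℝ}
    (hψ : Measurable ψ) {f : α → ℂ} {h : β → ℂ} (hh : AEStronglyMeasurable h (μ.map φ))
    (hfh : f =ᵐ[μ] h ∘ φ) (lam : Fin d → ℝ) :
    expCoeff μ (ψ ∘ φ) f lam = expCoeff (μ.map φ) ψ h lam := by
  have hconj : Measurable fun y => (starRingEnd ℂ) (e2pi (dotp lam (ψ y))) :=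
    (Complex.continuous_conj.comp (continuous_e2pi_dotp lam)).measurable.comp hψ
  rw [expCoeff, expCoeff, integral_map (f := fun y => h y * _) hφ.aemeasurable
    (hh.mul hconj.aestronglyMeasurable)]
  exact integral_congr_ae (hfh.mono fun x hx => by simp only [hx, Function.comp_apply])

theorem integral_norm_sq_eq_of_ae_eq_comp {φ : α → β} (hφ : Measurable φ) {f : α → ℂ}
    {h : β → ℂ} (hh : AEStronglyMeasurable h (μ.map φ)) (hfh : f =ᵐ[μ] h ∘ φ) :
    ∫ x, ‖f x‖ ^ 2 ∂μ = ∫ y, ‖h y‖ ^ 2 ∂(μ.map φ) := by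
  rw [integral_map (f := fun y => ‖h y‖ ^ 2) hφ.aemeasurable (hh.norm.pow 2)]
  exact integral_congr_ae (hfh.mono fun x hx => by simp only [hx, Function.comp_apply])

theorem frameIneq_iff_of_ae_eq_comp {φ : α → β} (hφ : Measurable φ) {ψ : β → Fin d → ℝ}
    (hψ : Measurable ψ) (A B : ℝ) {f : α → ℂ} {h : β → ℂ} (hh : AEStronglyMeasurable h (μ.map φ))
    (hfh : f =ᵐ[μ] h ∘ φ) :
    (A * ∫ x, ‖f x‖ ^ 2 ∂μ ≤ ∑' lam : Λ, ‖expCoeff μ (ψ ∘ φ) f lam‖ ^ 2 ∧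
      ∑' lam : Λ, ‖expCoeff μ (ψ ∘ φ) f lam‖ ^ 2 ≤ B * ∫ x, ‖f x‖ ^ 2 ∂μ) ↔
    (A * ∫ y, ‖h y‖ ^ 2 ∂(μ.map φ) ≤ ∑' lam : Λ, ‖expCoeff (μ.map φ) ψ h lam‖ ^ 2 ∧
      ∑' lam : Λ, ‖expCoeff (μ.map φ) ψ h lam‖ ^ 2 ≤ B * ∫ y, ‖h y‖ ^ 2 ∂(μ.map φ)) := by
  simp only [integral_norm_sq_eq_of_ae_eq_comp hφ hh hfh,
    expCoeff_eq_of_ae_eq_comp hφ hψ hh hfh]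

theorem FrameExp.map {φ : α → β} (hφ : Measurable φ) {ψ : β → Fin d → ℝ} (hψ : Measurable ψ)
    (hframe : FrameExp μ Λ (ψ ∘ φ)) : FrameExp (μ.map φ) Λ ψ := by
  obtain ⟨A, B, hA, hAB, hineq⟩ := hframe
  refine ⟨A, B, hA, hAB, fun h hh => ?_⟩
  exact (frameIneq_iff_of_ae_eq_comp hφ hψ A B hh.1 (.refl _ _)).1
    (hineq _ (hh.comp_of_map hφ.aemeasurable))

theorem FrameExp.comp {φ : α → β} (hφ : Measurable φ) {ψ : β → Fin d → ℝ} (hψ : Measurable ψ)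
    (hinj : EssInj μ φ) (hframe : FrameExp (μ.map φ) Λ ψ) : FrameExp μ Λ (ψ ∘ φ) := by
  obtain ⟨A, B, hA, hAB, hineq⟩ := hframe
  refine ⟨A, B, hA, hAB, fun f hf => ?_⟩
  obtain ⟨h, hh, hfh⟩ := hinj f hf
  exact (frameIneq_iff_of_ae_eq_comp hφ hψ A B hh.1 hfh).2 (hineq h hh)

theorem FrameExp.eq_zero_of_expCoeff_eq_zero {φ : α → Fin d → ℝ} (hframe : FrameExp μ Λ φ)
    {r : Lp ℂ 2 μ} (hr : ∀ lam ∈ Λ, expCoeff μ φ r lam = 0) : r = 0 := by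
  obtain ⟨A, B, hA, -, hineq⟩ := hframe
  have hlower : A * ‖r‖ ^ 2 ≤ ∑' lam : Λ, ‖expCoeff μ φ r lam‖ ^ 2 := by
    rw [Lp.norm_sq_eq_integral_norm_sq (𝕜 := ℂ)]
    exact (hineq r (Lp.memLp r)).1
  simp only [hr _ (Subtype.prop _), norm_zero, zero_pow two_ne_zero, tsum_zero] at hlower
  exact norm_eq_zero.1 (pow_eq_zero_iff two_ne_zero |>.1 (le_antisymm
    (nonpos_of_mul_nonpos_right hlower hA) (sq_nonneg _)))

theorem FrameExp.essInj [IsFiniteMeasure μ] {φ : α → β} (hφ : Measurable φ) {ψ : β → Fin d → ℝ}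
    (hψ : Measurable ψ) (hframe : FrameExp μ Λ (ψ ∘ φ)) : EssInj μ φ := by
  intro f hf
  have hmp : MeasurePreserving φ μ (μ.map φ) := ⟨hφ, rfl⟩
  let C := Lp.compMeasurePreservingₗᵢ ℂ φ hmp (p := 2) (E := ℂ)
  let V := LinearMap.range C.toLinearMap
  have hVc : IsComplete (V : Set (Lp ℂ 2 μ)) := by
    rw [LinearMap.coe_range]
    exact C.isometry.isUniformInducing.isComplete_range
  have : CompleteSpace V := hVc.completeSpace_coe
  have hV : V = ⊤ := by
    rw [← Submodule.orthogonal_eq_bot_iff, Submodule.eq_bot_iff]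
    intro r hr
    refine hframe.eq_zero_of_expCoeff_eq_zero fun lam _ => ?_
    rw [expCoeff_eq_inner (hψ.comp hφ)]
    refine Submodule.inner_right_of_mem_orthogonal
      (LinearMap.mem_range.2 ⟨(memLp_e2pi_dotp hψ lam).toLp _, ?_⟩) hr
    exact Lp.ext <| (Lp.coeFn_compMeasurePreserving _ hmp).trans <|
      (ae_eq_comp hφ.aemeasurable (memLp_e2pi_dotp hψ lam).coeFn_toLp).trans
      (memLp_e2pi_dotp (hψ.comp hφ) lam).coeFn_toLp.symm
  obtain ⟨h, hh⟩ : hf.toLp f ∈ V := hV ▸ Submodule.mem_top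
  exact ⟨h, Lp.memLp h, hf.coeFn_toLp.symm.trans (hh ▸ Lp.coeFn_compMeasurePreserving h hmp)⟩

end

theorem statement4_general {d : ℕ} (μ : Measure (Fin d → ℝ)) [IsFiniteMeasure μ]
    (Λ : Set (Fin d → ℝ))
    (φ : (Fin d → ℝ) → (Fin d → ℝ)) (hφ : Measurable φ) :
    FrameExp μ Λ φ ↔ (EssInj μ φ ∧ IsFrameSpectralMeasure (Measure.map φ μ) Λ) := by
  constructor
  · intro h
    exact ⟨FrameExp.essInj (ψ := id) hφ measurable_id h, FrameExp.map (ψ := id) hφ measurable_id h⟩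
  · rintro ⟨hinj, hν⟩
    exact FrameExp.comp (ψ := id) hφ measurable_id hinj hν

/-- `E(Λ, φ)` is a frame for `L²(μ)` iff `φ` is `μ`-essentially injective
and `ν = φ⋆μ` is a frame-spectral measure with frame spectrum `Λ`. -/
theorem statement4 {d : ℕ} (μ : Measure (Fin d → ℝ)) [IsFiniteMeasure μ]
    (Λ : Set (Fin d → ℝ)) (hΛ : Λ.Countable)
    (φ : (Fin d → ℝ) → (Fin d → ℝ)) (hφ : Measurable φ) :
    FrameExp μ Λ φ ↔ (EssInj μ φ ∧ IsFrameSpectralMeasure (Measure.map φ μ) Λ) :=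
  statement4_general μ Λ φ hφ
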